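/- The two matrices B1 = [[0,1,0,1],[-1,0,-1,0],[0,1,0,1],[1,0,1,0]] and B2 = [[0,2,0,1],[-1,0,-1,0],[0,1,0,1],[1,0,1,0]] have the same entrywise sign pattern, but B1 has 4 real eigenvalues (counted with multiplicity) and B2 has exactly 2 real eigenvalues. -/

import Mathlib

open Polynomial Matrix

theorem roots_X_sq_add_one {R : Type*} [CommRing R] [LinearOrder R] [IsStrictOrderedRing R] :
    (X ^ 2 + 1 : R[X]).roots = 0 := by
  refine Multiset.eq_zero_of_forall_notMem fun a ha => ?_
  have hroot : a ^ 2 + 1 = 0 := by simpa using (mem_roots'.mp ha).2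
  nlinarith [sq_nonneg a]

theorem charpoly_B1 :
    (!![(0:ℝ), 1, 0, 1; -1, 0, -1, 0; 0, 1, 0, 1; 1, 0, 1, 0] : Matrix (Fin 4) (Fin 4) ℝ).charpoly
      = X ^ 4 := by
  rw [Matrix.charpoly, Matrix.det_succ_row_zero]
  simp [Fin.sum_univ_succ, Matrix.det_succ_row_zero, Fin.succAbove, charmatrix_apply]
  ring

theorem charpoly_B2 :
    (!![(0:ℝ), 2, 0, 1; -1, 0, -1, 0; 0, 1, 0, 1; 1, 0, 1, 0] : Matrix (Fin 4) (Fin 4) ℝ).charpoly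
      = X ^ 2 * (X ^ 2 + 1) := by
  rw [Matrix.charpoly, Matrix.det_succ_row_zero]
  simp [Fin.sum_univ_succ, Matrix.det_succ_row_zero, Fin.succAbove, charmatrix_apply, map_ofNat]
  ring

/-- The matrices `B1` and `B2` below have the same entrywise sign pattern, but
`B1` has 4 real eigenvalues (counted with multiplicity) while `B2` has exactly
2 real eigenvalues. -/
theorem stmt_15 :
    let B1 : Matrix (Fin 4) (Fin 4) ℝ :=
      !![(0:ℝ), 1, 0, 1; -1, 0, -1, 0; 0, 1, 0, 1; 1, 0, 1, 0]
    let B2 : Matrix (Fin 4) (Fin 4) ℝ :=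
      !![(0:ℝ), 2, 0, 1; -1, 0, -1, 0; 0, 1, 0, 1; 1, 0, 1, 0]
    (∀ i j, Real.sign (B1 i j) = Real.sign (B2 i j)) ∧
    Multiset.card B1.charpoly.roots = 4 ∧
    Multiset.card B2.charpoly.roots = 2 := by
  refine ⟨fun i j => ?_, ?_, ?_⟩
  · fin_cases i <;> fin_cases j <;> norm_num [Real.sign_of_pos, Real.sign_of_neg]
  · rw [charpoly_B1, roots_X_pow]
    simp
  · have hq : (X ^ 2 + 1 : ℝ[X]) ≠ 0 := by simpa using X_pow_add_C_ne_zero two_pos (1 : ℝ)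
    rw [charpoly_B2, roots_mul (mul_ne_zero (pow_ne_zero 2 X_ne_zero) hq), roots_X_pow,
      roots_X_sq_add_one]
    simp
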